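/- Let U → M be a covering by disjoint open sets and C_p(M, U) the group of U-small smooth singular p-chains of M. Choose a section τ of the pushforward υ_* : C_p(U) → C_p(M, U). Then the operator ρ defined by ρ(σ) = τ(σ) for σ ∈ C_p(M, U) and ρ(σ) = (τ ∘ υ_* ∘ pr_*(σ)) ×_M σ for σ a chain in a q-fold fiber product, is a contracting homotopy for the augmented complex 0 ← C_p(M, U) ← C_p(U) ← C_p(U ×_M U) ← ⋯; hence this complex is exact. -/

import Mathlib

open Manifold Finset
noncomputable section

/-- The `i`-th face embedding of the standard `n`-simplex into the standard `n+1`-simplex,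
as a linear map (insertion of `0` at the `i`-th vertex coordinate). -/
def faceLM (n : ℕ) (i : Fin (n + 2)) : (Fin (n + 1) → ℝ) →ₗ[ℝ] (Fin (n + 2) → ℝ) where
  toFun x j := ∑ k, if i.succAbove k = j then x k else 0
  map_add' x y := by
    funext j
    show (∑ k, if i.succAbove k = j then (x k + y k) else 0) =
      (∑ k, if i.succAbove k = j then x k else 0) + (∑ k, if i.succAbove k = j then y k else 0)
    rw [← Finset.sum_add_distrib]
    exact Finset.sum_congr rfl fun k _ => by split <;> simp
  map_smul' c x := by
    funext j
    show (∑ k, if i.succAbove k = j then (c * x k) else 0) =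
      c * ∑ k, if i.succAbove k = j then x k else 0
    rw [Finset.mul_sum]
    exact Finset.sum_congr rfl fun k _ => by split <;> simp

lemma faceLM_apply (n : ℕ) (i : Fin (n + 2)) (x : Fin (n + 1) → ℝ) (j : Fin (n + 2)) :
    faceLM n i x j = ∑ k, if i.succAbove k = j then x k else 0 := rfl

lemma faceLM_mapsTo (n : ℕ) (i : Fin (n + 2)) :
    Set.MapsTo (faceLM n i) (stdSimplex ℝ (Fin (n + 1))) (stdSimplex ℝ (Fin (n + 2))) := by
  intro x hx
  obtain ⟨hx0, hx1⟩ := hx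
  constructor
  · intro j
    rw [faceLM_apply]
    refine Finset.sum_nonneg fun k _ => ?_
    split
    · exact hx0 k
    · exact le_refl 0
  · calc ∑ j, faceLM n i x j
        = ∑ j, ∑ k, (if i.succAbove k = j then x k else 0) :=
          Finset.sum_congr rfl fun j _ => faceLM_apply n i x j
      _ = ∑ k, ∑ j, (if i.succAbove k = j then x k else 0) := Finset.sum_comm
      _ = ∑ k, x k := Finset.sum_congr rfl fun k _ => by simp [Finset.sum_ite_eq]
      _ = 1 := hx1

variable {E : Type} [NormedAddCommGroup E] [NormedSpace ℝ E]
  {H : Type} [TopologicalSpace H] (I : ModelWithCorners ℝ E H)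
  (M : Type) [TopologicalSpace M] [ChartedSpace H M]

/-- A smooth singular `n`-simplex in a manifold `M`. -/
structure SSimplex (n : ℕ) where
  toFun : (Fin (n + 1) → ℝ) → M
  smooth : ContMDiffOn 𝓘(ℝ, Fin (n + 1) → ℝ) I (⊤ : ℕ∞) toFun (stdSimplex ℝ (Fin (n + 1)))

variable {I M}

/-- The `i`-th face of a smooth singular simplex. -/
def SSimplex.face {n : ℕ} (σ : SSimplex I M (n + 1)) (i : Fin (n + 2)) : SSimplex I M n where
  toFun := σ.toFun ∘ (faceLM n i)
  smooth := by
    have h1 : ContMDiff 𝓘(ℝ, Fin (n+1) → ℝ) 𝓘(ℝ, Fin (n+2) → ℝ) (⊤ : ℕ∞) ⇑(faceLM n i) := by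
      rw [← LinearMap.coe_toContinuousLinearMap' (faceLM n i)]
      exact (ContinuousLinearMap.contDiff _).contMDiff
    exact σ.smooth.comp h1.contMDiffOn (faceLM_mapsTo n i)

variable (I M)

/-- Smooth singular chains. -/
def SChain (n : ℕ) : Type := FreeAbelianGroup (SSimplex I M n)

instance (n : ℕ) : AddCommGroup (SChain I M n) :=
  inferInstanceAs (AddCommGroup (FreeAbelianGroup (SSimplex I M n)))

/-- The boundary operator on smooth singular chains. -/
def sbd (n : ℕ) : SChain I M (n + 1) →+ SChain I M n :=
  ∑ i : Fin (n + 2), (-1 : ℤ) ^ (i : ℕ) • FreeAbelianGroup.map (fun σ => σ.face i)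

variable (R : Type) [AddCommGroup R]

/-- Smooth singular cochains with coefficients in `R`. -/
def SCochain (n : ℕ) : Type := SSimplex I M n → R

instance (n : ℕ) : AddCommGroup (SCochain I M R n) :=
  inferInstanceAs (AddCommGroup (SSimplex I M n → R))

/-- The coboundary on smooth singular cochains. -/
def scd (n : ℕ) : SCochain I M R n →+ SCochain I M R (n + 1) :=
  AddMonoidHom.mk' (fun c σ => ∑ i : Fin (n + 2), (-1 : ℤ) ^ (i : ℕ) • c (σ.face i))
    (by
      intro c c'
      funext σ
      show ∑ i : Fin (n + 2), (-1 : ℤ) ^ (i : ℕ) • (c (σ.face i) + c' (σ.face i)) =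
        (∑ i : Fin (n + 2), (-1 : ℤ) ^ (i : ℕ) • c (σ.face i)) +
          ∑ i : Fin (n + 2), (-1 : ℤ) ^ (i : ℕ) • c' (σ.face i)
      simp [smul_add, Finset.sum_add_distrib])

/-- Pairing of a cochain with a chain (evaluation / integration). -/
def pairC {n : ℕ} (c : SCochain I M R n) : SChain I M n →+ R :=
  FreeAbelianGroup.lift c

lemma pairC_add {n : ℕ} (c c' : SCochain I M R n) (x : SChain I M n) :
    pairC I M R (c + c') x = pairC I M R c x + pairC I M R c' x := by
  show FreeAbelianGroup.lift (c + c') x = FreeAbelianGroup.lift c x + FreeAbelianGroup.lift c' x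
  refine FreeAbelianGroup.induction_on (x : FreeAbelianGroup (SSimplex I M n)) (by simp)
    (fun σ => ?_) (fun y hy => ?_) ?_
  · exact (FreeAbelianGroup.lift_apply_of (c + c') σ).trans
      (congrArg₂ (· + ·) (FreeAbelianGroup.lift_apply_of c σ)
        (FreeAbelianGroup.lift_apply_of c' σ)).symm
  · simp only [map_neg, hy]; abel
  · intro y z hy hz
    simp only [map_add, hy, hz]; abel

/-- The coefficient map `ℤ → ℝ` on cochains. -/
def intToReal (n : ℕ) : SCochain I M ℤ n →+ SCochain I M ℝ n :=
  AddMonoidHom.mk' (fun c σ => ((c σ : ℤ) : ℝ))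
    (by
      intro c c'
      funext σ
      show ((c σ + c' σ : ℤ) : ℝ) = ((c σ : ℤ) : ℝ) + ((c' σ : ℤ) : ℝ)
      push_cast
      ring)

/-- Degree `n-1` part (with the convention that it is trivial for `n = 0`):
this hosts the middle ("real cochain") component of the Hopkins–Singer complex. -/
def hCompT : ℕ → Type
  | 0 => PUnit
  | (m + 1) => SCochain I M ℝ m

instance : ∀ n, AddCommGroup (hCompT I M n)
  | 0 => inferInstanceAs (AddCommGroup PUnit)
  | (m + 1) => inferInstanceAs (AddCommGroup (SCochain I M ℝ m))

/-- Differential from the `(n-1)`-st level into degree `n`. -/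
def hd : ∀ n, hCompT I M n →+ SCochain I M ℝ n
  | 0 => 0
  | (m + 1) => scd I M ℝ m

variable (Ω : ∀ n : ℕ, AddSubgroup (SCochain I M ℝ n))

/-- The Hopkins–Singer group `DC_s^n(M)`: triples `(c, h, ω)` of an integral `n`-cochain,
a real `(n-1)`-cochain and a differential form `ω` (an element of the de Rham subcomplex
`Ω ⊆ C^•_ℝ`, forms being viewed as real cochains by integration), where `ω = 0` if `n < s`. -/
def DCgrp (s n : ℕ) :
    AddSubgroup (SCochain I M ℤ n × hCompT I M n × SCochain I M ℝ n) where
  carrier := {x | x.2.2 ∈ Ω n ∧ (n < s → x.2.2 = 0)}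
  zero_mem' := ⟨(Ω n).zero_mem, fun _ => rfl⟩
  add_mem' := by
    rintro a b ⟨ha, ha'⟩ ⟨hb, hb'⟩
    exact ⟨(Ω n).add_mem ha hb, fun h => by
      show a.2.2 + b.2.2 = 0
      rw [ha' h, hb' h, add_zero]⟩
  neg_mem' := by
    rintro a ⟨ha, ha'⟩
    refine ⟨(Ω n).neg_mem ha, fun h => ?_⟩
    show -a.2.2 = 0
    rw [ha' h, neg_zero]

/-- The Hopkins–Singer differential `d(c,h,ω) = (dc, ω - c - dh, dω)`. -/
def dDC (hΩ : ∀ n x, x ∈ Ω n → scd I M ℝ n x ∈ Ω (n + 1)) (s n : ℕ) :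
    (DCgrp I M Ω s n) →+ (DCgrp I M Ω s (n + 1)) :=
  AddMonoidHom.mk'
    (fun x => ⟨(scd I M ℤ n x.1.1,
        x.1.2.2 - intToReal I M n x.1.1 - hd I M n x.1.2.1,
        scd I M ℝ n x.1.2.2),
      ⟨hΩ n _ x.2.1, fun h => by
        rw [x.2.2 (Nat.lt_of_succ_lt h)]; exact map_zero _⟩⟩)
    (by
      intro x y
      apply Subtype.ext
      simp only [AddSubgroup.coe_add, Prod.fst_add, Prod.snd_add, map_add, Prod.mk_add_mk,
        Prod.mk.injEq]
      refine ⟨trivial, Prod.ext ?_ ?_⟩ <;> (try simp only [Prod.fst_add, Prod.snd_add]) <;> abel)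

/-- Cohomology at the middle spot of a two-step complex `A → B → C`. -/
def Hq {A B C : Type*} [AddCommGroup A] [AddCommGroup B] [AddCommGroup C]
    (f : A →+ B) (g : B →+ C) : Type _ :=
  g.ker ⧸ ((f.range).addSubgroupOf g.ker)

instance {A B C : Type*} [AddCommGroup A] [AddCommGroup B] [AddCommGroup C]
    (f : A →+ B) (g : B →+ C) : AddCommGroup (Hq f g) :=
  inferInstanceAs (AddCommGroup (_ ⧸ _))

/-- Class of a cocycle in `Hq`. -/
def HqMk {A B C : Type*} [AddCommGroup A] [AddCommGroup B] [AddCommGroup C]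
    (f : A →+ B) (g : B →+ C) (b : B) (hb : b ∈ g.ker) : Hq f g :=
  QuotientAddGroup.mk (⟨b, hb⟩ : g.ker)

/-- Cycles (with the convention `Z_0 = C_0`, everything). -/
def Zcyc : ∀ n : ℕ, AddSubgroup (SChain I M n)
  | 0 => ⊤
  | (m + 1) => (sbd I M m).ker


section Stmt6

variable {E : Type} [NormedAddCommGroup E] [NormedSpace ℝ E]
  {H : Type} [TopologicalSpace H] (I : ModelWithCorners ℝ E H)
  (M : Type) [TopologicalSpace M] [ChartedSpace H M]
  {ι : Type} (U : ι → Set M) (p : ℕ)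

/-- `U`-small smooth singular `p`-simplices: those whose image lies in some `U_α`. -/
def SmallS : Type :=
  {σ : SSimplex I M p // ∃ α, Set.MapsTo σ.toFun (stdSimplex ℝ (Fin (p + 1))) (U α)}

/-- Generators of `C_p` of the `q+1`-fold fibre product `U ×_M ⋯ ×_M U`: a smooth
`p`-simplex together with `q+1` indices such that its image lies in the corresponding
intersection. -/
def GenQ (q : ℕ) : Type :=
  Σ α : Fin (q + 1) → ι,
    {σ : SSimplex I M p // Set.MapsTo σ.toFun (stdSimplex ℝ (Fin (p + 1))) (⋂ i, U (α i))}

/-- Smooth `U`-small chains of `M`. -/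
def CSmall : Type := FreeAbelianGroup (SmallS I M U p)
/-- Smooth `p`-chains of the `q+1`-fold fibre product. -/
def LvC (q : ℕ) : Type := FreeAbelianGroup (GenQ I M U p q)

instance : AddCommGroup (CSmall I M U p) :=
  inferInstanceAs (AddCommGroup (FreeAbelianGroup _))
instance (q : ℕ) : AddCommGroup (LvC I M U p q) :=
  inferInstanceAs (AddCommGroup (FreeAbelianGroup _))

/-- The pushforward `υ_*` along the covering map (forgetting the index). -/
def upsStar : LvC I M U p 0 →+ CSmall I M U p :=
  FreeAbelianGroup.map (fun x =>
    (⟨x.2.1, ⟨x.1 0, fun y hy => Set.mem_iInter.1 (x.2.2 hy) 0⟩⟩ : SmallS I M U p))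

/-- The `i`-th face projection on generators (dropping the `i`-th index). -/
def dropF (q : ℕ) (i : Fin (q + 2)) (x : GenQ I M U p (q + 1)) : GenQ I M U p q :=
  ⟨x.1 ∘ i.succAbove,
    ⟨x.2.1, fun y hy => Set.mem_iInter.2 fun j => Set.mem_iInter.1 (x.2.2 hy) (i.succAbove j)⟩⟩

/-- The simplicial differential `δ_* = ∑ (-1)^i (∂_i)_*`. -/
def delStar (q : ℕ) : LvC I M U p (q + 1) →+ LvC I M U p q :=
  ∑ i : Fin (q + 2), (-1 : ℤ) ^ (i : ℕ) • FreeAbelianGroup.map (dropF I M U p q i)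

variable (τ : SmallS I M U p → ι)

/-- `ρ` on small chains of `M`: `σ ↦ (τ σ, σ)`. -/
def rhoSmall (hτ : ∀ σ : SmallS I M U p,
    Set.MapsTo σ.1.toFun (stdSimplex ℝ (Fin (p + 1))) (U (τ σ))) :
    CSmall I M U p →+ LvC I M U p 0 :=
  FreeAbelianGroup.map (fun σ =>
    (⟨fun _ => τ σ, ⟨σ.1, fun y hy => Set.mem_iInter.2 fun _ => hτ σ hy⟩⟩ : GenQ I M U p 0))

/-- `ρ` on chains of the fibre products: `(α, σ) ↦ (cons (τ σ̄) α, σ)`, i.e.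
`ρ(σ) = (τ ∘ υ_* ∘ pr_*)(σ) ×_M σ`. -/
def rhoQ (hτ : ∀ σ : SmallS I M U p,
    Set.MapsTo σ.1.toFun (stdSimplex ℝ (Fin (p + 1))) (U (τ σ)))
    (q : ℕ) : LvC I M U p q →+ LvC I M U p (q + 1) :=
  FreeAbelianGroup.map (fun x =>
    (⟨Fin.cons (τ ⟨x.2.1, ⟨x.1 0, fun y hy => Set.mem_iInter.1 (x.2.2 hy) 0⟩⟩) x.1,
      ⟨x.2.1, by
        intro y hy
        rw [Set.mem_iInter]
        intro i
        refine Fin.cases ?_ ?_ i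
        · rw [Fin.cons_zero]
          exact hτ _ hy
        · intro j
          rw [Fin.cons_succ]
          exact Set.mem_iInter.1 (x.2.2 hy) j⟩⟩ : GenQ I M U p (q + 1)))

/-!
Prepending the index `τ (υ (pr σ))` to the index tuple of a generator is an extra degeneracy
of the augmented semi-simplicial set of generators: the `0`-th face undoes it and the
`(j+1)`-st face turns it into the `j`-th face followed by it. The alternating face sums on the
free abelian groups then telescope to `ρ ∘ δ + δ ∘ ρ = id`, and a contracting homotopy makes
every cycle a boundary.
-/

theorem AddMonoidHom.exists_eq_of_homotopy_of_map_eq_zero {A B C : Type*} [AddCommGroup A]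
    [AddCommGroup B] [AddCommGroup C] {d : B →+ A} {d' : C →+ B} {h : A →+ B} {h' : B →+ C}
    (hom : ∀ x, h (d x) + d' (h' x) = x) {x : B} (hx : d x = 0) : ∃ y, d' y = x :=
  ⟨h' x, by simpa [hx] using hom x⟩

namespace FreeAbelianGroup

variable {X Y Z : Type*}

def alternatingFaceMap {n : ℕ} (d : Fin (n + 1) → Y → X) :
    FreeAbelianGroup Y →+ FreeAbelianGroup X :=
  ∑ i : Fin (n + 1), (-1 : ℤ) ^ (i : ℕ) • map (d i)

lemma alternatingFaceMap_of {n : ℕ} (d : Fin (n + 1) → Y → X) (y : Y) :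
    alternatingFaceMap d (of y) = ∑ i : Fin (n + 1), (-1 : ℤ) ^ (i : ℕ) • of (d i y) := by
  simp [alternatingFaceMap, map_of_apply]

lemma alternatingFaceMap_fin_one (f : Y → X) :
    alternatingFaceMap (fun _ : Fin 1 => f) = map f := by
  simp [alternatingFaceMap]

theorem map_comp_alternatingFaceMap_add_alternatingFaceMap_comp_map {n : ℕ}
    {d : Fin (n + 1) → Y → X} {d' : Fin (n + 2) → Z → Y} {s : X → Y} {s' : Y → Z}
    (h_zero : ∀ y, d' 0 (s' y) = y) (h_succ : ∀ j y, d' j.succ (s' y) = s (d j y)) :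
    (map s).comp (alternatingFaceMap d) + (alternatingFaceMap d').comp (map s') =
      AddMonoidHom.id _ := by
  ext y
  simp only [AddMonoidHom.add_apply, AddMonoidHom.comp_apply, AddMonoidHom.id_apply,
    map_of_apply, alternatingFaceMap_of, map_sum, map_zsmul, Fin.sum_univ_succ (n := n + 1),
    h_zero, h_succ, Fin.val_zero, Fin.val_succ, pow_zero, pow_succ, one_smul, mul_neg_one,
    neg_smul, Finset.sum_neg_distrib]
  abel

end FreeAbelianGroup

section Homotopy

variable {I M U p τ}

/-- `υ_* ∘ pr_*` on generators, `pr` being the projection to the first factor. -/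
def GenQ.toSmall {q : ℕ} (x : GenQ I M U p q) : SmallS I M U p :=
  ⟨x.2.1, x.1 0, fun _ hy => Set.mem_iInter.1 (x.2.2 hy) 0⟩

lemma GenQ.ext {q : ℕ} {x y : GenQ I M U p q} (h₁ : x.1 = y.1) (h₂ : x.2.1 = y.2.1) :
    x = y := by
  obtain ⟨a, s, hs⟩ := x
  obtain ⟨b, t, ht⟩ := y
  dsimp only at h₁ h₂
  subst h₁ h₂
  rfl

variable (hτ : ∀ σ : SmallS I M U p,
    Set.MapsTo σ.1.toFun (stdSimplex ℝ (Fin (p + 1))) (U (τ σ)))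

def rhoSmallGen (σ : SmallS I M U p) : GenQ I M U p 0 :=
  ⟨fun _ => τ σ, σ.1, fun _ hy => Set.mem_iInter.2 fun _ => hτ σ hy⟩

def rhoGen {q : ℕ} (x : GenQ I M U p q) : GenQ I M U p (q + 1) :=
  ⟨Fin.cons (τ x.toSmall) x.1,
    ⟨x.2.1, fun _ hy =>
      have hτx := hτ x.toSmall hy
      Set.mem_iInter.2 fun i => by
        cases i using Fin.cases with
        | zero => rw [Fin.cons_zero]; exact hτx
        | succ j => rw [Fin.cons_succ]; exact Set.mem_iInter.1 (x.2.2 hy) j⟩⟩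

lemma dropF_zero_rhoGen {q : ℕ} (x : GenQ I M U p q) :
    dropF I M U p q 0 (rhoGen hτ x) = x :=
  GenQ.ext (funext fun j => by simp [dropF, rhoGen]) rfl

lemma dropF_succ_rhoGen {q : ℕ} (j : Fin (q + 2)) (x : GenQ I M U p (q + 1)) :
    dropF I M U p (q + 1) j.succ (rhoGen hτ x) = rhoGen hτ (dropF I M U p q j x) := by
  refine GenQ.ext (funext fun k => ?_) rfl
  cases k using Fin.cases <;> simp [dropF, rhoGen, GenQ.toSmall]

lemma dropF_one_rhoGen (x : GenQ I M U p 0) :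
    dropF I M U p 0 1 (rhoGen hτ x) = rhoSmallGen hτ x.toSmall :=
  GenQ.ext (funext fun k => by rw [Fin.fin_one_eq_zero k]; rfl) rfl

lemma upsStar_rhoSmall (x : CSmall I M U p) : upsStar I M U p (rhoSmall I M U p τ hτ x) = x := by
  suffices (upsStar I M U p).comp (rhoSmall I M U p τ hτ) = AddMonoidHom.id _ from
    DFunLike.congr_fun this x
  exact FreeAbelianGroup.lift_ext _ _ fun _ => rfl

lemma rhoSmall_upsStar_add_delStar_rhoQ (x : LvC I M U p 0) :
    rhoSmall I M U p τ hτ (upsStar I M U p x) + delStar I M U p 0 (rhoQ I M U p τ hτ 0 x) =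
      x := by
  have h := FreeAbelianGroup.map_comp_alternatingFaceMap_add_alternatingFaceMap_comp_map
    (d := fun _ => GenQ.toSmall) (s := rhoSmallGen hτ) (dropF_zero_rhoGen hτ)
    fun j => by rw [Fin.fin_one_eq_zero j]; exact dropF_one_rhoGen hτ
  rw [FreeAbelianGroup.alternatingFaceMap_fin_one] at h
  exact DFunLike.congr_fun h x

lemma rhoQ_delStar_add_delStar_rhoQ (q : ℕ) (x : LvC I M U p (q + 1)) :
    rhoQ I M U p τ hτ q (delStar I M U p q x) +
      delStar I M U p (q + 1) (rhoQ I M U p τ hτ (q + 1) x) = x :=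
  DFunLike.congr_fun (FreeAbelianGroup.map_comp_alternatingFaceMap_add_alternatingFaceMap_comp_map
    (dropF_zero_rhoGen hτ) (dropF_succ_rhoGen hτ)) x

end Homotopy

theorem stmt6
    (hτ : ∀ σ : SmallS I M U p,
      Set.MapsTo σ.1.toFun (stdSimplex ℝ (Fin (p + 1))) (U (τ σ))) :
    -- contracting homotopy identities:
    (∀ x : CSmall I M U p, upsStar I M U p (rhoSmall I M U p τ hτ x) = x) ∧
    (∀ x : LvC I M U p 0,
      rhoSmall I M U p τ hτ (upsStar I M U p x) + delStar I M U p 0 (rhoQ I M U p τ hτ 0 x)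
        = x) ∧
    (∀ (q : ℕ) (x : LvC I M U p (q + 1)),
      rhoQ I M U p τ hτ q (delStar I M U p q x) +
        delStar I M U p (q + 1) (rhoQ I M U p τ hτ (q + 1) x) = x) ∧
    -- hence the augmented complex is exact:
    Function.Surjective (upsStar I M U p) ∧
    (∀ x : LvC I M U p 0, upsStar I M U p x = 0 → ∃ y : LvC I M U p 1, delStar I M U p 0 y = x) ∧
    (∀ (q : ℕ) (x : LvC I M U p (q + 1)), delStar I M U p q x = 0 →
      ∃ y : LvC I M U p (q + 2), delStar I M U p (q + 1) y = x) :=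
  ⟨upsStar_rhoSmall hτ, rhoSmall_upsStar_add_delStar_rhoQ hτ, rhoQ_delStar_add_delStar_rhoQ hτ,
    fun x => ⟨_, upsStar_rhoSmall hτ x⟩,
    fun _ => AddMonoidHom.exists_eq_of_homotopy_of_map_eq_zero
      (rhoSmall_upsStar_add_delStar_rhoQ hτ),
    fun q _ => AddMonoidHom.exists_eq_of_homotopy_of_map_eq_zero
      (rhoQ_delStar_add_delStar_rhoQ hτ q)⟩

end Stmt6

end
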